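/- Let λ ∈ K with λ ≠ 0. A K-linear map P : R → R on the truncated polynomial algebra R = K ⊕ V is a Rota–Baxter operator of weight λ if and only if there exist a scalar α ∈ {0, -1} ⊆ K and an idempotent Q ∈ End_K(V) (Q² = Q) such that P(a + u) = λ·α·a - λ·Q(u) for all a ∈ K and u ∈ V. -/

import Mathlib

/-!
Write `P 1 = (p, w)` and `P (0, u) = (f u, g u)`, so `g = sndBlock P`. The Rota–Baxter
identity at `(u, u)` gives `f u ^ 2 = 2 * f u ^ 2`, so `f = 0`; at `(1, u)` the terms in `p`
cancel and it gives `g ∘ g = -λ • g`; at `(1, 1)` it gives `p * (p + λ) = 0` and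
`λ • w + 2 • g w = 0`, and applying `g` to the latter leaves `-λ • g w = 0`, whence `g w = 0`
and `w = 0`. Thus `α = p / λ` and `Q = -λ⁻¹ • g`. The converse is a direct computation using
`α * α = -α` and `Q ∘ Q = Q`.
-/

open TrivSqZeroExt

def LinearMap.IsRotaBaxter {K A : Type*} [CommSemiring K] [Semiring A] [Module K A]
    (lam : K) (P : A →ₗ[K] A) : Prop :=
  ∀ x y, P x * P y = P (x * P y + P x * y + lam • (x * y))

namespace TrivSqZeroExt

section Module

variable {K M : Type*} [CommSemiring K] [AddCommMonoid M] [Module K M]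

def sndBlock (P : TrivSqZeroExt K M →ₗ[K] TrivSqZeroExt K M) : M →ₗ[K] M :=
  sndHom K M ∘ₗ P ∘ₗ inrHom K M

@[simp]
theorem sndBlock_apply (P : TrivSqZeroExt K M →ₗ[K] TrivSqZeroExt K M) (u : M) :
    sndBlock P u = (P (inr u)).snd :=
  rfl

variable [Module Kᵐᵒᵖ M] [IsCentralScalar K M]

omit [Module Kᵐᵒᵖ M] [IsCentralScalar K M] in
theorem linearMap_apply_eq_fst_smul_add (P : TrivSqZeroExt K M →ₗ[K] TrivSqZeroExt K M)
    (x : TrivSqZeroExt K M) : P x = x.fst • P 1 + P (inr x.snd) := by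
  have hinl : (inl x.fst : TrivSqZeroExt K M) = x.fst • 1 := by ext <;> simp
  rw [← map_smul, ← map_add, ← hinl, inl_fst_add_inr_snd_eq]

theorem inr_mul_eq_smul (u : M) (x : TrivSqZeroExt K M) : inr u * x = x.fst • inr u := by
  ext <;> simp

omit [IsCentralScalar K M] in
theorem mul_inr_eq_smul (x : TrivSqZeroExt K M) (u : M) : x * inr u = x.fst • inr u := by
  ext <;> simp

end Module

section Domain

variable {K M : Type*} [CommRing K] [IsDomain K] [AddCommGroup M] [Module K M]
  [Module Kᵐᵒᵖ M] [IsCentralScalar K M] {lam : K}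
  {P : TrivSqZeroExt K M →ₗ[K] TrivSqZeroExt K M}

theorem fst_apply_inr_of_isRotaBaxter (h : P.IsRotaBaxter lam) (u : M) :
    (P (inr u)).fst = 0 := by
  have key := congrArg fst (h (inr u) (inr u))
  rw [inr_mul_eq_smul, mul_inr_eq_smul, inr_mul_inr, smul_zero, add_zero, ← add_smul,
    map_smul] at key
  simp only [fst_mul, fst_smul, smul_eq_mul] at key
  exact mul_self_eq_zero.mp (by linear_combination -key)

theorem apply_inr_of_isRotaBaxter (h : P.IsRotaBaxter lam) (u : M) :
    P (inr u) = inr (sndBlock P u) := by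
  ext
  · exact fst_apply_inr_of_isRotaBaxter h u
  · rfl

theorem sndBlock_comp_self_of_isRotaBaxter (h : P.IsRotaBaxter lam) :
    sndBlock P ∘ₗ sndBlock P = -lam • sndBlock P := by
  ext v
  have key := congrArg snd (h 1 (inr v))
  simp only [apply_inr_of_isRotaBaxter h, one_mul, mul_inr_eq_smul, map_add, map_smul, snd_add,
    snd_smul, snd_inr] at key
  rw [LinearMap.comp_apply, LinearMap.smul_apply]
  linear_combination (norm := module) -key

theorem fst_apply_one_of_isRotaBaxter (h : P.IsRotaBaxter lam) :
    (P 1).fst * ((P 1).fst + lam) = 0 := by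
  have key := congrArg fst (h 1 1)
  simp only [one_mul, mul_one, map_add, map_smul, linearMap_apply_eq_fst_smul_add P (P 1),
    fst_add, fst_smul, fst_mul, smul_eq_mul, fst_apply_inr_of_isRotaBaxter h] at key
  linear_combination -key

omit [IsDomain K] in
theorem smul_snd_apply_one_of_isRotaBaxter (h : P.IsRotaBaxter lam) :
    lam • (P 1).snd + (2 : K) • sndBlock P (P 1).snd = 0 := by
  have key := congrArg snd (h 1 1)
  simp only [one_mul, mul_one, map_add, map_smul, linearMap_apply_eq_fst_smul_add P (P 1),
    snd_add, snd_smul, snd_mul, op_smul_eq_smul] at key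
  rw [sndBlock_apply]
  linear_combination (norm := module) -key

theorem apply_one_of_isRotaBaxter [Module.IsTorsionFree K M] (h : P.IsRotaBaxter lam)
    (hlam : lam ≠ 0) :
    P 1 = inl (P 1).fst := by
  set w := (P 1).snd
  have hw := smul_snd_apply_one_of_isRotaBaxter h
  have hgw : sndBlock P w = 0 := by
    have key := congrArg (sndBlock P) hw
    rw [map_add, map_smul, map_smul, ← LinearMap.comp_apply,
      sndBlock_comp_self_of_isRotaBaxter h, map_zero] at key
    refine (smul_eq_zero_iff_right hlam).mp ?_
    rw [LinearMap.smul_apply] at key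
    linear_combination (norm := module) -key
  rw [hgw, smul_zero, add_zero] at hw
  ext
  · rfl
  · exact (smul_eq_zero_iff_right hlam).mp hw

end Domain

section Field

variable {K M : Type*} [Field K] [AddCommGroup M] [Module K M] [Module Kᵐᵒᵖ M]
  [IsCentralScalar K M] {lam : K} {P : TrivSqZeroExt K M →ₗ[K] TrivSqZeroExt K M}

theorem exists_idempotent_of_isRotaBaxter (h : P.IsRotaBaxter lam) (hlam : lam ≠ 0) :
    ∃ (α : K) (Q : M →ₗ[K] M), (α = 0 ∨ α = -1) ∧ Q ∘ₗ Q = Q ∧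
      ∀ (a : K) (u : M), P (inl a + inr u) = inl (lam * α * a) - inr (lam • Q u) := by
  refine ⟨(P 1).fst / lam, -lam⁻¹ • sndBlock P, ?_, ?_, fun a u => ?_⟩
  · rcases mul_eq_zero.mp (fst_apply_one_of_isRotaBaxter h) with hp | hp
    · simp [hp]
    · simp [eq_neg_of_add_eq_zero_left hp, hlam]
  · rw [LinearMap.smul_comp, LinearMap.comp_smul, smul_smul,
      sndBlock_comp_self_of_isRotaBaxter h, smul_smul]
    congr 1
    field_simp
  · have hlam_mul : lam * ((P 1).fst / lam) = (P 1).fst := mul_div_cancel₀ _ hlam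
    have hlam_smul : lam • -lam⁻¹ • sndBlock P = -sndBlock P := by
      rw [smul_smul, mul_neg, mul_inv_cancel₀ hlam, neg_one_smul]
    rw [hlam_mul, ← LinearMap.smul_apply, hlam_smul, linearMap_apply_eq_fst_smul_add,
      apply_one_of_isRotaBaxter h hlam, apply_inr_of_isRotaBaxter h]
    ext <;> simp [mul_comm]

theorem isRotaBaxter_of_apply_eq {α : K} {Q : M →ₗ[K] M} (hα : α = 0 ∨ α = -1) (hQ : Q ∘ₗ Q = Q)
    (hP : ∀ (a : K) (u : M), P (inl a + inr u) = inl (lam * α * a) - inr (lam • Q u)) :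
    P.IsRotaBaxter lam := by
  have hαα : α * α = -α := by rcases hα with rfl | rfl <;> ring
  have hQQ (v : M) : Q (Q v) = Q v := LinearMap.congr_fun hQ v
  have hPx (x : TrivSqZeroExt K M) : P x = inl (lam * α * x.fst) - inr (lam • Q x.snd) := by
    rw [← hP, inl_fst_add_inr_snd_eq]
  have hfst (x : TrivSqZeroExt K M) : (P x).fst = lam * α * x.fst := by simp [hPx]
  have hsnd (x : TrivSqZeroExt K M) : (P x).snd = -lam • Q x.snd := by simp [hPx]
  intro x y
  ext
  · simp only [fst_mul, fst_add, fst_smul, hfst, smul_eq_mul]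
    linear_combination (-(lam ^ 2 * x.fst * y.fst)) * hαα
  · simp only [snd_mul, snd_add, snd_smul, hfst, hsnd, op_smul_eq_smul, map_add, map_smul,
      hQQ]
    module

end Field

end TrivSqZeroExt

theorem weight_lambda_iff_general {K : Type*} [Field K] {n : ℕ}
    (lam : K) (hlam : lam ≠ 0)
    (P : TrivSqZeroExt K (Fin n → K) →ₗ[K] TrivSqZeroExt K (Fin n → K)) :
    (∀ x y, P x * P y = P (x * P y + P x * y + lam • (x * y))) ↔
      ∃ (α : K) (Q : (Fin n → K) →ₗ[K] (Fin n → K)),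
        (α = 0 ∨ α = -1) ∧ Q ∘ₗ Q = Q ∧
        ∀ (a : K) (u : Fin n → K),
          P (inl a + inr u) = inl (lam * α * a) - inr (lam • Q u) :=
  ⟨fun h => exists_idempotent_of_isRotaBaxter h hlam,
    fun ⟨_, _, hα, hQ, hP⟩ => isRotaBaxter_of_apply_eq hα hQ hP⟩

/-- for `λ ≠ 0`, a `K`-linear map `P` on the truncated polynomial algebra
`R = K ⊕ V` is a Rota–Baxter operator of weight `λ` iff there are `α ∈ {0, -1}` and an
idempotent `Q ∈ End_K(V)` with `P(a + u) = λ·α·a - λ·Q u`. -/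
theorem weight_lambda_iff {K : Type*} [Field K] [CharZero K] {n : ℕ} (hn : 1 ≤ n)
    (lam : K) (hlam : lam ≠ 0)
    (P : TrivSqZeroExt K (Fin n → K) →ₗ[K] TrivSqZeroExt K (Fin n → K)) :
    (∀ x y, P x * P y = P (x * P y + P x * y + lam • (x * y))) ↔
      ∃ (α : K) (Q : (Fin n → K) →ₗ[K] (Fin n → K)),
        (α = 0 ∨ α = -1) ∧ Q ∘ₗ Q = Q ∧
        ∀ (a : K) (u : Fin n → K),
          P (inl a + inr u) = inl (lam * α * a) - inr (lam • Q u) :=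
  weight_lambda_iff_general lam hlam P
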